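/- arXiv:2012.14674 — 10 statements merged into one kernel-verified Lean document; each statement's English description precedes it below -/
import Mathlib

section
/- Let p, q ≥ 1, let μ be a probability vector on Fin p and ν a probability vector on Fin q satisfying p·(min_u μ_u) + q·(min_v ν_v) ≥ 1. Define π⁺_{u,v} = μ_u/q + ν_v/p − 1/(p·q). Then: (i) π⁺_{u,v} ≥ 0 for all u, v; (ii) π⁺ is a coupling of μ and ν; (iii) for every coupling π of μ and ν, Σ_{u,v} (π_{u,v} − 1/(p·q))² ≥ Σ_{u,v} (π⁺_{u,v} − 1/(p·q))², with equality if and only if π = π⁺. In other words, the indetermination coupling π⁺ is the unique minimizer of the squared-deviation cost among all couplings of μ and ν. -/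
/-!
The matrix `π⁺ - 1/(pq)` has the form `a u + b v`, whereas the difference `π - π⁺` of two
matrices with the same marginals has zero row and column sums, so the two are orthogonal in
`ℝ^(p×q)`. Pythagoras then gives `cost π = ‖π - π⁺‖² + cost π⁺`. Nonnegativity of `π⁺` is the
condition `p·min μ + q·min ν ≥ 1` with the denominators cleared.
-/

open Finset

section

variable {ι κ : Type*} [Fintype ι] [Fintype κ]

theorem sum_sum_mul_add_eq_zero_of_marginals_eq_zero {D : ι → κ → ℝ}
    (hrow : ∀ i, ∑ j, D i j = 0) (hcol : ∀ j, ∑ i, D i j = 0) (a : ι → ℝ) (b : κ → ℝ) :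
    ∑ i, ∑ j, D i j * (a i + b j) = 0 := by
  simp only [mul_add, sum_add_distrib]
  rw [sum_comm (f := fun i j => D i j * b j)]
  simp only [← sum_mul, hrow, hcol, zero_mul, sum_const_zero, add_zero]

theorem sum_sum_sq_sub_eq_add_of_marginals_eq {X Y : ι → κ → ℝ}
    (hrow : ∀ i, ∑ j, X i j = ∑ j, Y i j) (hcol : ∀ j, ∑ i, X i j = ∑ i, Y i j)
    {a : ι → ℝ} {b : κ → ℝ} (hY : ∀ i j, Y i j = a i + b j) (c : ℝ) :
    ∑ i, ∑ j, (X i j - c) ^ 2 = ∑ i, ∑ j, (X i j - Y i j) ^ 2 + ∑ i, ∑ j, (Y i j - c) ^ 2 := by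
  have cross : ∑ i, ∑ j, (X i j - Y i j) * (a i + (b j - c)) = 0 :=
    sum_sum_mul_add_eq_zero_of_marginals_eq_zero
      (fun i => by rw [sum_sub_distrib, hrow, sub_self])
      (fun j => by rw [sum_sub_distrib, hcol, sub_self]) a (fun j => b j - c)
  have expand : ∀ i j, (X i j - c) ^ 2
      = (X i j - Y i j) ^ 2 + 2 * ((X i j - Y i j) * (a i + (b j - c))) + (Y i j - c) ^ 2 := by
    intro i j; rw [hY]; ring
  simp only [expand, sum_add_distrib, ← mul_sum, cross, mul_zero, add_zero]

theorem sum_sum_sq_eq_zero_iff {D : ι → κ → ℝ} :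
    ∑ i, ∑ j, D i j ^ 2 = 0 ↔ ∀ i j, D i j = 0 := by
  rw [← Fintype.sum_prod_type', Fintype.sum_eq_zero_iff_of_nonneg fun _ => sq_nonneg _]
  simp [funext_iff]

theorem sum_sum_sq_sub_le_of_marginals_eq {X Y : ι → κ → ℝ}
    (hrow : ∀ i, ∑ j, X i j = ∑ j, Y i j) (hcol : ∀ j, ∑ i, X i j = ∑ i, Y i j)
    {a : ι → ℝ} {b : κ → ℝ} (hY : ∀ i j, Y i j = a i + b j) (c : ℝ) :
    ∑ i, ∑ j, (Y i j - c) ^ 2 ≤ ∑ i, ∑ j, (X i j - c) ^ 2 := by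
  rw [sum_sum_sq_sub_eq_add_of_marginals_eq hrow hcol hY c, le_add_iff_nonneg_left]
  exact sum_nonneg fun i _ => sum_nonneg fun j _ => sq_nonneg _

theorem sum_sum_sq_sub_eq_iff_of_marginals_eq {X Y : ι → κ → ℝ}
    (hrow : ∀ i, ∑ j, X i j = ∑ j, Y i j) (hcol : ∀ j, ∑ i, X i j = ∑ i, Y i j)
    {a : ι → ℝ} {b : κ → ℝ} (hY : ∀ i j, Y i j = a i + b j) (c : ℝ) :
    ∑ i, ∑ j, (X i j - c) ^ 2 = ∑ i, ∑ j, (Y i j - c) ^ 2 ↔ ∀ i j, X i j = Y i j := by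
  rw [sum_sum_sq_sub_eq_add_of_marginals_eq hrow hcol hY c, add_eq_right, sum_sum_sq_eq_zero_iff]
  simp only [sub_eq_zero]

noncomputable def indeterminationCoupling (μ : ι → ℝ) (ν : κ → ℝ) (i : ι) (j : κ) : ℝ :=
  μ i / Fintype.card κ + ν j / Fintype.card ι - 1 / (Fintype.card ι * Fintype.card κ)

theorem indeterminationCoupling_nonneg {μ : ι → ℝ} {ν : κ → ℝ} {i : ι} {j : κ}
    (h : 1 ≤ Fintype.card ι * μ i + Fintype.card κ * ν j) :
    0 ≤ indeterminationCoupling μ ν i j := by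
  have : Nonempty ι := ⟨i⟩
  have : Nonempty κ := ⟨j⟩
  have hι : (0 : ℝ) < Fintype.card ι := by exact_mod_cast Fintype.card_pos
  have hκ : (0 : ℝ) < Fintype.card κ := by exact_mod_cast Fintype.card_pos
  have hcleared : indeterminationCoupling μ ν i j
      = (Fintype.card ι * μ i + Fintype.card κ * ν j - 1) / (Fintype.card ι * Fintype.card κ) := by
    rw [indeterminationCoupling]; field_simp
  rw [hcleared]
  exact div_nonneg (by linarith) (by positivity)

theorem sum_indeterminationCoupling_right (μ : ι → ℝ) {ν : κ → ℝ} (hν : ∑ j, ν j = 1) (i : ι) :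
    ∑ j, indeterminationCoupling μ ν i j = μ i := by
  have : Nonempty κ := by
    by_contra h
    simp [not_nonempty_iff.mp h] at hν
  have hκ : (Fintype.card κ : ℝ) ≠ 0 := by exact_mod_cast Fintype.card_ne_zero
  simp only [indeterminationCoupling, sum_sub_distrib, sum_add_distrib, sum_const, card_univ,
    nsmul_eq_mul, ← sum_div, hν]
  field_simp
  ring

theorem indeterminationCoupling_swap (μ : ι → ℝ) (ν : κ → ℝ) (i : ι) (j : κ) :
    indeterminationCoupling ν μ j i = indeterminationCoupling μ ν i j := by
  simp only [indeterminationCoupling, mul_comm (Fintype.card κ : ℝ), add_comm (ν j / _)]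

theorem sum_indeterminationCoupling_left {μ : ι → ℝ} (hμ : ∑ i, μ i = 1) (ν : κ → ℝ) (j : κ) :
    ∑ i, indeterminationCoupling μ ν i j = ν j := by
  simp only [← indeterminationCoupling_swap μ ν, sum_indeterminationCoupling_right ν hμ]

end

theorem indetermination_unique_minimizer_square_cost_general
    (p q : ℕ) (hp : 0 < p) (hq : 0 < q)
    (μ : Fin p → ℝ) (ν : Fin q → ℝ)
    (hμsum : ∑ u, μ u = 1) (hνsum : ∑ v, ν v = 1)
    (hcond : 1 ≤ (p : ℝ) * Finset.univ.inf' ⟨⟨0, hp⟩, Finset.mem_univ _⟩ μ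
               + (q : ℝ) * Finset.univ.inf' ⟨⟨0, hq⟩, Finset.mem_univ _⟩ ν) :
    (∀ u v, 0 ≤ μ u / (q : ℝ) + ν v / (p : ℝ) - 1 / ((p : ℝ) * (q : ℝ))) ∧
    (∀ u, ∑ v, (μ u / (q : ℝ) + ν v / (p : ℝ) - 1 / ((p : ℝ) * (q : ℝ))) = μ u) ∧
    (∀ v, ∑ u, (μ u / (q : ℝ) + ν v / (p : ℝ) - 1 / ((p : ℝ) * (q : ℝ))) = ν v) ∧
    (∀ π : Fin p → Fin q → ℝ,
      (∀ u v, 0 ≤ π u v) →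
      (∀ u, ∑ v, π u v = μ u) →
      (∀ v, ∑ u, π u v = ν v) →
      ((∑ u, ∑ v, (π u v - 1 / ((p : ℝ) * (q : ℝ)))^2
          ≥ ∑ u, ∑ v, ((μ u / (q : ℝ) + ν v / (p : ℝ) - 1 / ((p : ℝ) * (q : ℝ)))
              - 1 / ((p : ℝ) * (q : ℝ)))^2) ∧
       ((∑ u, ∑ v, (π u v - 1 / ((p : ℝ) * (q : ℝ)))^2
          = ∑ u, ∑ v, ((μ u / (q : ℝ) + ν v / (p : ℝ) - 1 / ((p : ℝ) * (q : ℝ)))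
              - 1 / ((p : ℝ) * (q : ℝ)))^2)
          ↔ ∀ u v, π u v = μ u / (q : ℝ) + ν v / (p : ℝ) - 1 / ((p : ℝ) * (q : ℝ))))) := by
  have hcoupling : indeterminationCoupling μ ν
      = fun u v => μ u / (q : ℝ) + ν v / (p : ℝ) - 1 / ((p : ℝ) * (q : ℝ)) := by
    ext u v; simp only [indeterminationCoupling, Fintype.card_fin]
  have hrow := sum_indeterminationCoupling_right μ hνsum
  have hcol := sum_indeterminationCoupling_left hμsum ν
  have hsplit : ∀ u v, indeterminationCoupling μ ν u v
      = μ u / (q : ℝ) + (ν v / (p : ℝ) - 1 / ((p : ℝ) * (q : ℝ))) := by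
    simp [hcoupling, add_sub_assoc]
  rw [hcoupling] at hrow hcol hsplit
  refine ⟨fun u v => ?_, hrow, hcol, fun π _ hπrow hπcol => ?_⟩
  · have hmin : 1 ≤ Fintype.card (Fin p) * μ u + Fintype.card (Fin q) * ν v := by
      rw [Fintype.card_fin, Fintype.card_fin]
      refine hcond.trans ?_
      gcongr <;> exact inf'_le _ (mem_univ _)
    simpa only [hcoupling] using indeterminationCoupling_nonneg hmin
  · have hπrow' u := (hπrow u).trans (hrow u).symm
    have hπcol' v := (hπcol v).trans (hcol v).symm
    exact ⟨sum_sum_sq_sub_le_of_marginals_eq hπrow' hπcol' hsplit _,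
      sum_sum_sq_sub_eq_iff_of_marginals_eq hπrow' hπcol' hsplit _⟩

/-- Under the positivity condition `p·(min μ) + q·(min ν) ≥ 1`, the
indetermination matrix `π⁺_{u,v} = μ_u/q + ν_v/p − 1/(pq)` is nonnegative, is a
coupling of `μ` and `ν`, and is the unique minimizer of the squared-deviation
cost `Σ (π_{u,v} − 1/(pq))²` among all couplings of `μ` and `ν`. -/
theorem indetermination_unique_minimizer_square_cost
    (p q : ℕ) (hp : 0 < p) (hq : 0 < q)
    (μ : Fin p → ℝ) (ν : Fin q → ℝ)
    (hμnonneg : ∀ u, 0 ≤ μ u) (hνnonneg : ∀ v, 0 ≤ ν v)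
    (hμsum : ∑ u, μ u = 1) (hνsum : ∑ v, ν v = 1)
    (hcond : 1 ≤ (p : ℝ) * Finset.univ.inf' ⟨⟨0, hp⟩, Finset.mem_univ _⟩ μ
               + (q : ℝ) * Finset.univ.inf' ⟨⟨0, hq⟩, Finset.mem_univ _⟩ ν) :
    (∀ u v, 0 ≤ μ u / (q : ℝ) + ν v / (p : ℝ) - 1 / ((p : ℝ) * (q : ℝ))) ∧
    (∀ u, ∑ v, (μ u / (q : ℝ) + ν v / (p : ℝ) - 1 / ((p : ℝ) * (q : ℝ))) = μ u) ∧
    (∀ v, ∑ u, (μ u / (q : ℝ) + ν v / (p : ℝ) - 1 / ((p : ℝ) * (q : ℝ))) = ν v) ∧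
    (∀ π : Fin p → Fin q → ℝ,
      (∀ u v, 0 ≤ π u v) →
      (∀ u, ∑ v, π u v = μ u) →
      (∀ v, ∑ u, π u v = ν v) →
      ((∑ u, ∑ v, (π u v - 1 / ((p : ℝ) * (q : ℝ)))^2
          ≥ ∑ u, ∑ v, ((μ u / (q : ℝ) + ν v / (p : ℝ) - 1 / ((p : ℝ) * (q : ℝ)))
              - 1 / ((p : ℝ) * (q : ℝ)))^2) ∧
       ((∑ u, ∑ v, (π u v - 1 / ((p : ℝ) * (q : ℝ)))^2
          = ∑ u, ∑ v, ((μ u / (q : ℝ) + ν v / (p : ℝ) - 1 / ((p : ℝ) * (q : ℝ)))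
              - 1 / ((p : ℝ) * (q : ℝ)))^2)
          ↔ ∀ u v, π u v = μ u / (q : ℝ) + ν v / (p : ℝ) - 1 / ((p : ℝ) * (q : ℝ))))) :=
  indetermination_unique_minimizer_square_cost_general p q hp hq μ ν hμsum hνsum hcond
end

section
/- Let p, q ≥ 1, let μ be a probability vector on Fin p and ν a probability vector on Fin q, and let π⁺_{u,v} = μ_u/q + ν_v/p − 1/(p·q) be the indetermination coupling. Then for every coupling π of μ and ν, Σ_{u,v} π_{u,v}·π⁺_{u,v} = (1/q)·Σ_u μ_u² + (1/p)·Σ_v ν_v² − 1/(p·q) = Σ_{u,v} (π⁺_{u,v})². Consequently, Σ_{u,v} π_{u,v}² ≥ Σ_{u,v} (π⁺_{u,v})² for every coupling π of μ and ν. -/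
/-- For every coupling `π` of `μ` and `ν`, the cross term
`Σ π_{u,v} π⁺_{u,v}` equals `(1/q) Σ μ_u² + (1/p) Σ ν_v² − 1/(pq)`, which also
equals `Σ (π⁺_{u,v})²`; consequently `Σ π_{u,v}² ≥ Σ (π⁺_{u,v})²`. -/
theorem indetermination_cross_term_and_norm_bound
    (p q : ℕ) (hp : 0 < p) (hq : 0 < q)
    (μ : Fin p → ℝ) (ν : Fin q → ℝ)
    (hμnonneg : ∀ u, 0 ≤ μ u) (hνnonneg : ∀ v, 0 ≤ ν v)
    (hμsum : ∑ u, μ u = 1) (hνsum : ∑ v, ν v = 1)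
    (π : Fin p → Fin q → ℝ)
    (hπnonneg : ∀ u v, 0 ≤ π u v)
    (hrow : ∀ u, ∑ v, π u v = μ u)
    (hcol : ∀ v, ∑ u, π u v = ν v) :
    (∑ u, ∑ v, π u v * (μ u / (q : ℝ) + ν v / (p : ℝ) - 1 / ((p : ℝ) * (q : ℝ)))
      = (1 / (q : ℝ)) * ∑ u, (μ u)^2 + (1 / (p : ℝ)) * ∑ v, (ν v)^2
        - 1 / ((p : ℝ) * (q : ℝ))) ∧
    ((1 / (q : ℝ)) * ∑ u, (μ u)^2 + (1 / (p : ℝ)) * ∑ v, (ν v)^2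
        - 1 / ((p : ℝ) * (q : ℝ))
      = ∑ u, ∑ v, (μ u / (q : ℝ) + ν v / (p : ℝ) - 1 / ((p : ℝ) * (q : ℝ)))^2) ∧
    (∑ u, ∑ v, (π u v)^2
      ≥ ∑ u, ∑ v, (μ u / (q : ℝ) + ν v / (p : ℝ) - 1 / ((p : ℝ) * (q : ℝ)))^2) := by
  have hp0 : (p : ℝ) ≠ 0 := Nat.cast_ne_zero.mpr hp.ne'
  have hq0 : (q : ℝ) ≠ 0 := Nat.cast_ne_zero.mpr hq.ne'
  set c : ℝ := 1 / ((p : ℝ) * (q : ℝ)) with hc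
  -- general cross-term lemma for any coupling σ
  have key : ∀ σ : Fin p → Fin q → ℝ, (∀ u, ∑ v, σ u v = μ u) →
      (∀ v, ∑ u, σ u v = ν v) →
      ∑ u, ∑ v, σ u v * (μ u / (q : ℝ) + ν v / (p : ℝ) - c)
        = (1 / (q : ℝ)) * ∑ u, (μ u)^2 + (1 / (p : ℝ)) * ∑ v, (ν v)^2 - c := by
    intro σ hr hcσ
    have expand : ∑ u, ∑ v, σ u v * (μ u / (q : ℝ) + ν v / (p : ℝ) - c)
        = (∑ u, ∑ v, σ u v * (μ u / (q : ℝ)))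
          + (∑ u, ∑ v, σ u v * (ν v / (p : ℝ)))
          - (∑ u, ∑ v, σ u v * c) := by
      simp only [mul_add, mul_sub, Finset.sum_add_distrib, Finset.sum_sub_distrib]
    have t1 : ∑ u, ∑ v, σ u v * (μ u / (q : ℝ)) = (1 / (q : ℝ)) * ∑ u, (μ u)^2 := by
      rw [Finset.mul_sum]
      refine Finset.sum_congr rfl fun u _ => ?_
      rw [← Finset.sum_mul, hr u]; ring
    have t2 : ∑ u, ∑ v, σ u v * (ν v / (p : ℝ)) = (1 / (p : ℝ)) * ∑ v, (ν v)^2 := by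
      rw [Finset.sum_comm, Finset.mul_sum]
      refine Finset.sum_congr rfl fun v _ => ?_
      rw [← Finset.sum_mul, hcσ v]; ring
    have t3 : ∑ u, ∑ v, σ u v * c = c := by
      have : ∑ u, ∑ v, σ u v * c = (∑ u, ∑ v, σ u v) * c := by
        rw [Finset.sum_mul]
        exact Finset.sum_congr rfl fun u _ => (Finset.sum_mul ..).symm
      rw [this]
      simp [hr, hμsum]
    rw [expand, t1, t2, t3]
  -- π⁺ is itself a coupling
  have hrow' : ∀ u, ∑ v : Fin q, (μ u / (q : ℝ) + ν v / (p : ℝ) - c) = μ u := by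
    intro u
    calc ∑ v : Fin q, (μ u / (q : ℝ) + ν v / (p : ℝ) - c)
        = ∑ v : Fin q, ((μ u / (q : ℝ) - c) + ν v / (p : ℝ)) :=
          Finset.sum_congr rfl fun v _ => by ring
      _ = (q : ℝ) * (μ u / (q : ℝ) - c) + (∑ v, ν v) / (p : ℝ) := by
          rw [Finset.sum_add_distrib, Finset.sum_const, Finset.card_univ, Fintype.card_fin,
            nsmul_eq_mul, Finset.sum_div]
      _ = μ u := by rw [hνsum, hc]; field_simp; ring
  have hcol' : ∀ v, ∑ u : Fin p, (μ u / (q : ℝ) + ν v / (p : ℝ) - c) = ν v := by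
    intro v
    calc ∑ u : Fin p, (μ u / (q : ℝ) + ν v / (p : ℝ) - c)
        = ∑ u : Fin p, ((ν v / (p : ℝ) - c) + μ u / (q : ℝ)) :=
          Finset.sum_congr rfl fun u _ => by ring
      _ = (p : ℝ) * (ν v / (p : ℝ) - c) + (∑ u, μ u) / (q : ℝ) := by
          rw [Finset.sum_add_distrib, Finset.sum_const, Finset.card_univ, Fintype.card_fin,
            nsmul_eq_mul, Finset.sum_div]
      _ = ν v := by rw [hμsum, hc]; field_simp; ring
  have h1 := key π hrow hcol
  have h2 := key (fun u v => μ u / (q : ℝ) + ν v / (p : ℝ) - c) hrow' hcol'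
  have h2' : ∑ u, ∑ v, (μ u / (q : ℝ) + ν v / (p : ℝ) - c)^2
      = (1 / (q : ℝ)) * ∑ u, (μ u)^2 + (1 / (p : ℝ)) * ∑ v, (ν v)^2 - c := by
    rw [← h2]
    refine Finset.sum_congr rfl fun u _ => Finset.sum_congr rfl fun v _ => ?_
    ring
  refine ⟨h1, h2'.symm, ?_⟩
  have hsq : (0:ℝ) ≤ ∑ u, ∑ v, (π u v - (μ u / (q : ℝ) + ν v / (p : ℝ) - c))^2 :=
    Finset.sum_nonneg fun u _ => Finset.sum_nonneg fun v _ => sq_nonneg _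
  have hexp : ∑ u, ∑ v, (π u v - (μ u / (q : ℝ) + ν v / (p : ℝ) - c))^2
      = ∑ u, ∑ v, (π u v)^2
        - 2 * ∑ u, ∑ v, π u v * (μ u / (q : ℝ) + ν v / (p : ℝ) - c)
        + ∑ u, ∑ v, (μ u / (q : ℝ) + ν v / (p : ℝ) - c)^2 := by
    rw [Finset.mul_sum, ← Finset.sum_sub_distrib, ← Finset.sum_add_distrib]
    refine Finset.sum_congr rfl fun u _ => ?_
    rw [Finset.mul_sum, ← Finset.sum_sub_distrib, ← Finset.sum_add_distrib]
    refine Finset.sum_congr rfl fun v _ => ?_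
    ring
  rw [hexp, h1, h2'] at hsq
  linarith
end

section
/- Let p, q ≥ 1 and let c : Fin p → Fin q → ℝ be a real p×q matrix. Then c satisfies the Full-Monge property, i.e. c_{u,v} + c_{u',v'} = c_{u',v} + c_{u,v'} for all u, u', v, v', if and only if for all u, v one has c_{u,v} = (Σ_{v'} c_{u,v'})/q + (Σ_{u'} c_{u',v})/p − (Σ_{u',v'} c_{u',v'})/(p·q). In particular, a probability matrix is Full-Monge if and only if it is the indetermination coupling of its own margins. -/
open Finset

section FullMonge

variable {R : Type*} {ι κ : Type*}

def IsFullMonge [Add R] (c : ι → κ → R) : Prop :=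
  ∀ u u' : ι, ∀ v v' : κ, c u v + c u' v' = c u' v + c u v'

theorem IsFullMonge.of_eq_add [AddCommMonoid R] {c : ι → κ → R} (a : ι → R) (b : κ → R)
    (hc : ∀ u v, c u v = a u + b v) : IsFullMonge c := by
  intro u u' v v'
  simp only [hc]
  abel

/-- Sum the Full-Monge identity `c u v + c u' v' = c u' v + c u v'` over all `u'` and `v'`. -/
theorem IsFullMonge.card_mul_card_mul_eq [Fintype ι] [Fintype κ] [CommRing R]
    {c : ι → κ → R} (hc : IsFullMonge c) (u : ι) (v : κ) :
    (Fintype.card ι * Fintype.card κ : R) * c u v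
      = Fintype.card κ * ∑ u', c u' v + Fintype.card ι * ∑ v', c u v'
        - ∑ u', ∑ v', c u' v' := by
  have hsum :
      ∑ u' : ι, ∑ v' : κ, (c u v + c u' v') = ∑ u' : ι, ∑ v' : κ, (c u' v + c u v') :=
    sum_congr rfl fun u' _ => sum_congr rfl fun v' _ => hc u u' v v'
  simp only [sum_add_distrib, sum_const, card_univ, nsmul_eq_mul, ← mul_sum] at hsum
  linear_combination hsum

theorem isFullMonge_iff_eq_indetermination [Fintype ι] [Fintype κ] [Field R] {c : ι → κ → R}
    (hι : (Fintype.card ι : R) ≠ 0) (hκ : (Fintype.card κ : R) ≠ 0) :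
    IsFullMonge c ↔ ∀ u v, c u v = (∑ v', c u v') / Fintype.card κ
      + (∑ u', c u' v) / Fintype.card ι
      - (∑ u', ∑ v', c u' v') / (Fintype.card ι * Fintype.card κ) := by
  refine ⟨fun hc u v => ?_, fun hc => ?_⟩
  · field_simp
    linear_combination hc.card_mul_card_mul_eq u v
  · refine IsFullMonge.of_eq_add
      (fun u => (∑ v', c u v') / Fintype.card κ
        - (∑ u', ∑ v', c u' v') / (Fintype.card ι * Fintype.card κ))
      (fun v => (∑ u', c u' v) / Fintype.card ι) fun u v => ?_
    rw [hc u v]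
    ring

end FullMonge

/-- A real `p × q` matrix is Full-Monge
(`c_{u,v} + c_{u',v'} = c_{u',v} + c_{u,v'}` for all indices) if and only if
every entry equals the indetermination expression built from its own margins:
`c_{u,v} = (Σ_{v'} c_{u,v'})/q + (Σ_{u'} c_{u',v})/p − (Σ_{u',v'} c_{u',v'})/(pq)`. -/
theorem fullMonge_iff_indetermination
    (p q : ℕ) (hp : 0 < p) (hq : 0 < q)
    (c : Fin p → Fin q → ℝ) :
    (∀ u u' : Fin p, ∀ v v' : Fin q, c u v + c u' v' = c u' v + c u v')
    ↔ (∀ u v, c u v = (∑ v', c u v') / (q : ℝ) + (∑ u', c u' v) / (p : ℝ)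
        - (∑ u', ∑ v', c u' v') / ((p : ℝ) * (q : ℝ))) := by
  have h := isFullMonge_iff_eq_indetermination (c := c)
    (by simpa using hp.ne') (by simpa using hq.ne')
  simpa only [IsFullMonge, Fintype.card_fin] using h
end

section
/- Let p, q ≥ 1, let μ be a probability vector on Fin p and ν a probability vector on Fin q with p·(min_u μ_u) + q·(min_v ν_v) ≥ 1, and suppose μ_0 = min_u μ_u > 0 (the first modality has the minimal margin). Let π⁺ be the indetermination coupling of μ and ν. Define the two-step drawing law P(u,v) = μ_u · [ (μ_0/μ_u)·(π⁺_{0,v}/μ_0) + (1 − μ_0/μ_u)·(1/q) ], i.e. draw u from μ, then with probability μ_0/μ_u draw v from the normalized first row of π⁺ and otherwise draw v uniformly on Fin q. Then P(u,v) = π⁺_{u,v} = μ_u/q + ν_v/p − 1/(p·q) for all u, v; the constructive drawing realizes the indetermination law. -/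
/-- The constructive two-step drawing (draw `u` from `μ`; then with
probability `μ_0/μ_u` draw `v` from the normalized first row of `π⁺`, otherwise
uniformly on `Fin q`) realizes the indetermination coupling:
`P(u,v) = π⁺_{u,v} = μ_u/q + ν_v/p − 1/(pq)`. -/
theorem constructive_drawing_realizes_indetermination
    (p q : ℕ) (hp : 0 < p) (hq : 0 < q)
    (μ : Fin p → ℝ) (ν : Fin q → ℝ)
    (hμnonneg : ∀ u, 0 ≤ μ u) (hνnonneg : ∀ v, 0 ≤ ν v)
    (hμsum : ∑ u, μ u = 1) (hνsum : ∑ v, ν v = 1)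
    (hmin : ∀ u, μ ⟨0, hp⟩ ≤ μ u)
    (hμ0pos : 0 < μ ⟨0, hp⟩)
    (hcond : 1 ≤ (p : ℝ) * μ ⟨0, hp⟩
               + (q : ℝ) * Finset.univ.inf' ⟨⟨0, hq⟩, Finset.mem_univ _⟩ ν) :
    ∀ u v, μ u * ((μ ⟨0, hp⟩ / μ u)
          * ((μ ⟨0, hp⟩ / (q : ℝ) + ν v / (p : ℝ) - 1 / ((p : ℝ) * (q : ℝ))) / μ ⟨0, hp⟩)
        + (1 - μ ⟨0, hp⟩ / μ u) * (1 / (q : ℝ)))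
      = μ u / (q : ℝ) + ν v / (p : ℝ) - 1 / ((p : ℝ) * (q : ℝ)) := by
  intro u v
  have hu : (0:ℝ) < μ u := lt_of_lt_of_le hμ0pos (hmin u)
  have hp' : (p:ℝ) ≠ 0 := Nat.cast_ne_zero.2 hp.ne'
  have hq' : (q:ℝ) ≠ 0 := Nat.cast_ne_zero.2 hq.ne'
  field_simp
  ring
end

section
/- Let p ≥ 1, let μ be a probability vector on Fin p, let ρ > 0, and let σ : Fin p ≃ Fin p be a bijection (a deterministic guessing strategy, where σ(i) is the i-th guess). Define G(σ,u) for u in Fin p as the number of questions needed to guess u, i.e. G(σ,u) = i + 1 where σ(i) = u (positions counted from 1). Then Σ_u μ_u · (G(σ,u))^ρ ≥ (1 + log p)^{−ρ} · (Σ_u μ_u^{1/(1+ρ)})^{1+ρ}. -/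
/-!
Write `G u` for the rank of `u`. Hölder's inequality with exponents `1 + ρ` and `(1 + ρ) / ρ`,
applied to `μ u ^ (1 / (1 + ρ)) = (μ u * G u ^ ρ) ^ (1 / (1 + ρ)) * (G u ^ (-ρ)) ^ (1 / (1 + ρ))`,
bounds `(∑ u, μ u ^ (1 / (1 + ρ))) ^ (1 + ρ)` by the moment `∑ u, μ u * G u ^ ρ` times
`(∑ u, (G u)⁻¹) ^ ρ`. Since `G` is a bijection onto `{1, …, p}`, the last sum is the harmonic
number `H_p ≤ 1 + log p`.
-/

open Finset Real

theorem sum_rpow_one_div_one_add_rpow_le {ι : Type*} (s : Finset ι) {a w : ι → ℝ} {ρ : ℝ}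
    (hρ : 0 < ρ) (ha : ∀ i ∈ s, 0 ≤ a i) (hw : ∀ i ∈ s, 0 < w i) :
    (∑ i ∈ s, a i ^ (1 / (1 + ρ))) ^ (1 + ρ) ≤
      (∑ i ∈ s, a i * w i ^ ρ) * (∑ i ∈ s, (w i)⁻¹) ^ ρ := by
  have hρ' : 0 < 1 + ρ := by linarith
  have htriple : HolderTriple 1 ρ⁻¹ (1 / (1 + ρ)) :=
    ⟨by rw [inv_one, inv_inv, one_div, inv_inv], one_pos, inv_pos.2 hρ⟩
  have hprod : ∀ i ∈ s, (a i * w i ^ ρ * w i ^ (-ρ)) ^ (1 / (1 + ρ)) = a i ^ (1 / (1 + ρ)) :=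
    fun i hi => by rw [mul_assoc, ← rpow_add (hw i hi), add_neg_cancel, rpow_zero, mul_one]
  have hinv : ∀ i ∈ s, (w i ^ (-ρ)) ^ ρ⁻¹ = (w i)⁻¹ := fun i hi => by
    rw [← rpow_mul (hw i hi).le, neg_mul, mul_inv_cancel₀ hρ.ne', rpow_neg_one]
  have holder := Lr_rpow_le_Lp_mul_Lq_of_nonneg s htriple
    (fun i hi => mul_nonneg (ha i hi) (rpow_nonneg (hw i hi).le ρ))
    (fun i hi => rpow_nonneg (hw i hi).le (-ρ))
  simp only [rpow_one, sum_congr rfl hprod, sum_congr rfl hinv] at holder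
  have hA : 0 ≤ ∑ i ∈ s, a i * w i ^ ρ :=
    sum_nonneg fun i hi => mul_nonneg (ha i hi) (rpow_nonneg (hw i hi).le ρ)
  have hB : 0 ≤ ∑ i ∈ s, (w i)⁻¹ := sum_nonneg fun i hi => (inv_pos.2 (hw i hi)).le
  calc (∑ i ∈ s, a i ^ (1 / (1 + ρ))) ^ (1 + ρ)
      ≤ ((∑ i ∈ s, a i * w i ^ ρ) ^ (1 / (1 + ρ) / 1) *
          (∑ i ∈ s, (w i)⁻¹) ^ (1 / (1 + ρ) / ρ⁻¹)) ^ (1 + ρ) :=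
        rpow_le_rpow (sum_nonneg fun i hi => rpow_nonneg (ha i hi) _) holder hρ'.le
    _ = (∑ i ∈ s, a i * w i ^ ρ) * (∑ i ∈ s, (w i)⁻¹) ^ ρ := by
        rw [mul_rpow (rpow_nonneg hA _) (rpow_nonneg hB _), ← rpow_mul hA, ← rpow_mul hB]
        have h₁ : 1 / (1 + ρ) / 1 * (1 + ρ) = 1 := by field_simp
        have h₂ : 1 / (1 + ρ) / ρ⁻¹ * (1 + ρ) = ρ := by field_simp
        rw [h₁, h₂, rpow_one]

theorem sum_inv_symm_add_one_eq_harmonic {n : ℕ} (σ : Fin n ≃ Fin n) :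
    ∑ u, (((σ.symm u : ℕ) : ℝ) + 1)⁻¹ = harmonic n := by
  rw [Equiv.sum_comp σ.symm fun i : Fin n => (((i : ℕ) : ℝ) + 1)⁻¹,
    Fin.sum_univ_eq_sum_range (fun i => ((i : ℝ) + 1)⁻¹), harmonic]
  push_cast
  rfl

theorem guessing_lower_bound_general
    (p : ℕ)
    (μ : Fin p → ℝ)
    (hμnonneg : ∀ u, 0 ≤ μ u)
    (ρ : ℝ) (hρ : 0 < ρ)
    (σ : Fin p ≃ Fin p) :
    ∑ u, μ u * (((σ.symm u : ℕ) : ℝ) + 1) ^ ρ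
      ≥ (1 + Real.log p) ^ (-ρ) * (∑ u, μ u ^ (1 / (1 + ρ))) ^ (1 + ρ) := by
  have hlog : 0 < 1 + Real.log p := by linarith [Real.log_natCast_nonneg p]
  have hharmonic : ∑ u, (((σ.symm u : ℕ) : ℝ) + 1)⁻¹ ≤ 1 + Real.log p :=
    (sum_inv_symm_add_one_eq_harmonic σ).trans_le (harmonic_le_one_add_log p)
  have hholder := sum_rpow_one_div_one_add_rpow_le univ hρ (fun u _ => hμnonneg u)
    (fun u _ => show 0 < ((σ.symm u : ℕ) : ℝ) + 1 by positivity)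
  set moment := ∑ u, μ u * (((σ.symm u : ℕ) : ℝ) + 1) ^ ρ
  have hmoment : 0 ≤ moment := sum_nonneg fun u _ => mul_nonneg (hμnonneg u) (by positivity)
  calc (1 + Real.log p) ^ (-ρ) * (∑ u, μ u ^ (1 / (1 + ρ))) ^ (1 + ρ)
      ≤ (1 + Real.log p) ^ (-ρ) * (moment * (1 + Real.log p) ^ ρ) := by
        gcongr
        exact hholder.trans (by gcongr)
    _ = moment := by
        rw [rpow_neg hlog.le]
        field_simp

/-- Lower bound on the ρ-moment of the guessing time for any
deterministic strategy `σ`: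
`Σ_u μ_u·G(σ,u)^ρ ≥ (1 + log p)^{−ρ}·(Σ_u μ_u^{1/(1+ρ)})^{1+ρ}`,
where `G(σ,u) = (σ⁻¹ u).val + 1`. -/
theorem guessing_lower_bound
    (p : ℕ) (hp : 0 < p)
    (μ : Fin p → ℝ)
    (hμnonneg : ∀ u, 0 ≤ μ u) (hμsum : ∑ u, μ u = 1)
    (ρ : ℝ) (hρ : 0 < ρ)
    (σ : Fin p ≃ Fin p) :
    ∑ u, μ u * (((σ.symm u : ℕ) : ℝ) + 1) ^ ρ
      ≥ (1 + Real.log p) ^ (-ρ) * (∑ u, μ u ^ (1 / (1 + ρ))) ^ (1 + ρ) :=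
  guessing_lower_bound_general p μ hμnonneg ρ hρ σ
end

section
/- Let p, q ≥ 1, let π : Fin p → Fin q → ℝ be a joint probability matrix (π_{u,v} ≥ 0, Σ_{u,v} π_{u,v} = 1), let ρ > 0, and for each v in Fin q let σ_v : Fin p ≃ Fin p be a bijection (the strategy used upon observing side information v). With G(σ_v,u) = (σ_v⁻¹(u)).val + 1 the rank at which u is guessed, one has Σ_v Σ_u π_{u,v} · (G(σ_v,u))^ρ ≥ (1 + log p)^{−ρ} · Σ_v (Σ_u (π_{u,v})^{1/(1+ρ)})^{1+ρ}. -/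
/-!
Fix the side information `v` and write `G u` for the rank at which `u` is guessed. Hölder's
inequality with exponents `1` and `1/ρ` splits `π u v ^ (1/(1+ρ))` as
`(π u v * G u ^ ρ) ^ (1/(1+ρ)) * (G u ^ (-ρ)) ^ (1/(1+ρ))`, giving
`(∑ u, π u v ^ (1/(1+ρ))) ^ (1+ρ) ≤ (∑ u, π u v * G u ^ ρ) * (∑ u, (G u)⁻¹) ^ ρ`.
Since `G` is a bijection onto `{1, …, p}`, the last sum is the harmonic number `H_p ≤ 1 + log p`.
Summing over `v` gives the theorem.
-/

open Finset

theorem sum_inv_rank_eq_harmonic {α : Type*} [Fintype α] {n : ℕ} (e : α ≃ Fin n) :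
    ∑ a, (((e a : ℕ) : ℝ) + 1)⁻¹ = harmonic n := by
  rw [e.sum_comp (fun i : Fin n => (((i : ℕ) : ℝ) + 1)⁻¹), Fin.sum_univ_eq_sum_range
    (fun i => ((i : ℝ) + 1)⁻¹), harmonic]
  push_cast
  rfl

theorem sum_inv_rank_le_one_add_log {n : ℕ} (σ : Fin n ≃ Fin n) :
    ∑ u, (((σ.symm u : ℕ) : ℝ) + 1)⁻¹ ≤ 1 + Real.log n := by
  rw [sum_inv_rank_eq_harmonic σ.symm]
  exact harmonic_le_one_add_log n

section

open Real

theorem rpow_sum_rpow_one_div_one_add_le {ι : Type*} (s : Finset ι) {w g : ι → ℝ} {ρ : ℝ}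
    (hw : ∀ i ∈ s, 0 ≤ w i) (hg : ∀ i ∈ s, 0 < g i) (hρ : 0 < ρ) :
    (∑ i ∈ s, w i ^ (1 / (1 + ρ))) ^ (1 + ρ)
      ≤ (∑ i ∈ s, w i * g i ^ ρ) * (∑ i ∈ s, (g i)⁻¹) ^ ρ := by
  have hρ1 : 0 < 1 + ρ := by linarith
  have htriple : HolderTriple 1 (1 / ρ) (1 / (1 + ρ)) :=
    ⟨by simp only [inv_one, one_div, inv_inv], one_pos, by positivity⟩
  have holder := Lr_rpow_le_Lp_mul_Lq_of_nonneg s htriple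
    (f := fun i => w i * g i ^ ρ) (g := fun i => g i ^ (-ρ))
    (fun i hi => by have := hw i hi; have := hg i hi; positivity)
    (fun i hi => by have := hg i hi; positivity)
  have hsplit : ∀ i ∈ s, (w i * g i ^ ρ * g i ^ (-ρ)) ^ (1 / (1 + ρ)) = w i ^ (1 / (1 + ρ)) := by
    intro i hi
    rw [mul_assoc, ← rpow_add (hg i hi), add_neg_cancel, rpow_zero, mul_one]
  have hinv : ∀ i ∈ s, (g i ^ (-ρ)) ^ (1 / ρ) = (g i)⁻¹ := by
    intro i hi
    rw [← rpow_mul (hg i hi).le, neg_mul, mul_one_div_cancel hρ.ne', rpow_neg_one]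
  simp only [sum_congr rfl hsplit, sum_congr rfl hinv, rpow_one, div_one] at holder
  have hS : 0 ≤ ∑ i ∈ s, w i * g i ^ ρ :=
    sum_nonneg fun i hi => by have := hw i hi; have := hg i hi; positivity
  have hH : 0 ≤ ∑ i ∈ s, (g i)⁻¹ := sum_nonneg fun i hi => by have := hg i hi; positivity
  calc (∑ i ∈ s, w i ^ (1 / (1 + ρ))) ^ (1 + ρ)
      ≤ ((∑ i ∈ s, w i * g i ^ ρ) ^ (1 / (1 + ρ)) * (∑ i ∈ s, (g i)⁻¹) ^ (ρ / (1 + ρ)))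
          ^ (1 + ρ) := by
        gcongr
        · exact sum_nonneg fun i hi => rpow_nonneg (hw i hi) _
        · convert holder using 3
          field_simp
    _ = (∑ i ∈ s, w i * g i ^ ρ) * (∑ i ∈ s, (g i)⁻¹) ^ ρ := by
        rw [mul_rpow (by positivity) (by positivity), ← rpow_mul hS, ← rpow_mul hH,
          one_div_mul_cancel hρ1.ne', rpow_one, div_mul_cancel₀ _ hρ1.ne']

end

theorem generalized_guessing_lower_bound_general
    (p q : ℕ)
    (π : Fin p → Fin q → ℝ)
    (hπnonneg : ∀ u v, 0 ≤ π u v)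
    (ρ : ℝ) (hρ : 0 < ρ)
    (σ : Fin q → (Fin p ≃ Fin p)) :
    ∑ v, ∑ u, π u v * ((((σ v).symm u : ℕ) : ℝ) + 1) ^ ρ
      ≥ (1 + Real.log p) ^ (-ρ) * ∑ v, (∑ u, (π u v) ^ (1 / (1 + ρ))) ^ (1 + ρ) := by
  rw [ge_iff_le, mul_sum]
  refine sum_le_sum fun v _ => ?_
  set G : Fin p → ℝ := fun u => (((σ v).symm u : ℕ) : ℝ) + 1
  set L := 1 + Real.log p
  have hL : 0 < L := by positivity
  have hS : 0 ≤ ∑ u, π u v * G u ^ ρ :=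
    sum_nonneg fun u _ => by have := hπnonneg u v; positivity
  calc L ^ (-ρ) * (∑ u, π u v ^ (1 / (1 + ρ))) ^ (1 + ρ)
      ≤ L ^ (-ρ) * ((∑ u, π u v * G u ^ ρ) * (∑ u, (G u)⁻¹) ^ ρ) := by
        gcongr
        exact rpow_sum_rpow_one_div_one_add_le _ (fun u _ => hπnonneg u v)
          (fun u _ => by positivity) hρ
    _ ≤ L ^ (-ρ) * ((∑ u, π u v * G u ^ ρ) * L ^ ρ) := by
        gcongr
        exact sum_inv_rank_le_one_add_log (σ v)
    _ = ∑ u, π u v * G u ^ ρ := by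
        rw [Real.rpow_neg hL.le]
        field_simp

/-- Generalized guessing lower bound with side information: for a
joint probability matrix `π` and a family of strategies `σ_v`,
`Σ_v Σ_u π_{u,v}·G(σ_v,u)^ρ ≥ (1 + log p)^{−ρ}·Σ_v (Σ_u π_{u,v}^{1/(1+ρ)})^{1+ρ}`. -/
theorem generalized_guessing_lower_bound
    (p q : ℕ) (hp : 0 < p) (hq : 0 < q)
    (π : Fin p → Fin q → ℝ)
    (hπnonneg : ∀ u v, 0 ≤ π u v)
    (hπsum : ∑ u, ∑ v, π u v = 1)
    (ρ : ℝ) (hρ : 0 < ρ)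
    (σ : Fin q → (Fin p ≃ Fin p)) :
    ∑ v, ∑ u, π u v * ((((σ v).symm u : ℕ) : ℝ) + 1) ^ ρ
      ≥ (1 + Real.log p) ^ (-ρ) * ∑ v, (∑ u, (π u v) ^ (1 / (1 + ρ))) ^ (1 + ρ) :=
  generalized_guessing_lower_bound_general p q π hπnonneg ρ hρ σ
end

section
/- Let p, q ≥ 1, let μ be a probability vector on Fin p and ν a probability vector on Fin q with all ν_v > 0 and p·(min_u μ_u) + q·(min_v ν_v) ≥ 1, and let π⁺_{u,v} = μ_u/q + ν_v/p − 1/(p·q) be their indetermination coupling. Then for every coupling π of μ and ν, the one-shot performance of the margin strategy satisfies M_marge(π) = Σ_{u,v} (π_{u,v})²/ν_v ≥ ‖π⁺‖₂²/(max_v ν_v), where ‖π⁺‖₂² = Σ_{u,v} (π⁺_{u,v})². Thus no coupling of the given margins can force the lower bound below the one attained through indetermination. -/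
/-- For every coupling `π` of `μ` and `ν`, the one-shot
performance of the margin strategy is bounded below by the bound attained
through the indetermination coupling:
`Σ_{u,v} π_{u,v}²/ν_v ≥ ‖π⁺‖₂²/(max_v ν_v)`. -/
theorem one_shot_lower_bound_via_indetermination
    (p q : ℕ) (hp : 0 < p) (hq : 0 < q)
    (μ : Fin p → ℝ) (ν : Fin q → ℝ)
    (hμnonneg : ∀ u, 0 ≤ μ u) (hνpos : ∀ v, 0 < ν v)
    (hμsum : ∑ u, μ u = 1) (hνsum : ∑ v, ν v = 1)
    (hcond : 1 ≤ (p : ℝ) * Finset.univ.inf' ⟨⟨0, hp⟩, Finset.mem_univ _⟩ μ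
               + (q : ℝ) * Finset.univ.inf' ⟨⟨0, hq⟩, Finset.mem_univ _⟩ ν)
    (π : Fin p → Fin q → ℝ)
    (hπnonneg : ∀ u v, 0 ≤ π u v)
    (hrow : ∀ u, ∑ v, π u v = μ u)
    (hcol : ∀ v, ∑ u, π u v = ν v) :
    ∑ u, ∑ v, (π u v)^2 / ν v
      ≥ (∑ u, ∑ v, (μ u / (q : ℝ) + ν v / (p : ℝ) - 1 / ((p : ℝ) * (q : ℝ)))^2)
        / (Finset.univ.sup' ⟨⟨0, hq⟩, Finset.mem_univ _⟩ ν) := by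
  set M := Finset.univ.sup' ⟨⟨0, hq⟩, Finset.mem_univ _⟩ ν with hMdef
  have hp2 : (0:ℝ) < p := by exact_mod_cast hp
  have hq' : (0:ℝ) < q := by exact_mod_cast hq
  have hM : ∀ v, ν v ≤ M := fun v => Finset.le_sup' ν (Finset.mem_univ v)
  have hMpos : 0 < M := lt_of_lt_of_le (hνpos ⟨0, hq⟩) (hM _)
  set f : Fin p → Fin q → ℝ :=
    fun u v => μ u / (q : ℝ) + ν v / (p : ℝ) - 1 / ((p : ℝ) * (q : ℝ)) with hfdef
  -- margins of f
  have hfrow : ∀ u, ∑ v, f u v = μ u := by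
    intro u
    simp only [hfdef, Finset.sum_sub_distrib, Finset.sum_add_distrib,
      Finset.sum_const, Finset.card_univ, Fintype.card_fin, nsmul_eq_mul,
      ← Finset.sum_div, hνsum]
    field_simp
    ring
  have hfcol : ∀ v, ∑ u, f u v = ν v := by
    intro v
    simp only [hfdef, Finset.sum_sub_distrib, Finset.sum_add_distrib,
      Finset.sum_const, Finset.card_univ, Fintype.card_fin, nsmul_eq_mul,
      ← Finset.sum_div, hμsum]
    field_simp
    ring
  -- inner product with f depends only on margins
  have key : ∀ (ρ : Fin p → Fin q → ℝ), (∀ u, ∑ v, ρ u v = μ u) →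
      (∀ v, ∑ u, ρ u v = ν v) →
      ∑ u, ∑ v, ρ u v * f u v
        = (∑ u, (μ u)^2) / q + (∑ v, (ν v)^2) / p - 1 / ((p:ℝ) * q) := by
    intro ρ hr hc
    have : ∀ u, ∑ v, ρ u v * f u v
        = (μ u)^2 / q + (∑ v, ρ u v * (ν v / p)) - μ u / ((p:ℝ)*q) := by
      intro u
      simp only [hfdef, mul_sub, mul_add, Finset.sum_sub_distrib,
        Finset.sum_add_distrib]
      rw [← Finset.sum_mul, ← Finset.sum_mul, hr u]
      ring
    rw [Finset.sum_congr rfl fun u _ => this u]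
    simp only [Finset.sum_sub_distrib, Finset.sum_add_distrib]
    have hcomm : ∑ x : Fin p, ∑ v : Fin q, ρ x v * (ν v / (p:ℝ))
        = ∑ v : Fin q, ∑ x : Fin p, ρ x v * (ν v / (p:ℝ)) := Finset.sum_comm
    rw [hcomm]
    have h2 : ∀ v, ∑ u, ρ u v * (ν v / p) = (ν v)^2 / p := by
      intro v
      rw [← Finset.sum_mul, hc v]
      ring
    rw [Finset.sum_congr rfl fun v _ => h2 v, ← Finset.sum_div, ← Finset.sum_div,
      ← Finset.sum_div, hμsum]
  have kπ := key π hrow hcol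
  have kf := key f hfrow hfcol
  -- ∑∑ f² ≤ ∑∑ π²
  have hnorm : ∑ u, ∑ v, (f u v)^2 ≤ ∑ u, ∑ v, (π u v)^2 := by
    have hpos2 : 0 ≤ ∑ u, ∑ v, ((π u v)^2 - 2*(π u v * f u v) + f u v * f u v) := by
      refine Finset.sum_nonneg fun u _ => Finset.sum_nonneg fun v _ => ?_
      have h : (π u v)^2 - 2*(π u v * f u v) + f u v * f u v
          = (π u v - f u v)^2 := by ring
      rw [h]; exact sq_nonneg _
    have hdiff : ∑ u, ∑ v, ((π u v)^2 - 2*(π u v * f u v) + f u v * f u v)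
        = ∑ u, ∑ v, (π u v)^2 - 2 * (∑ u, ∑ v, π u v * f u v)
          + ∑ u, ∑ v, f u v * f u v := by
      simp only [Finset.sum_add_distrib, Finset.sum_sub_distrib, Finset.mul_sum]
    have hsq : ∑ u, ∑ v, f u v * f u v = ∑ u, ∑ v, (f u v)^2 := by
      simp only [← sq]
    rw [hdiff] at hpos2
    nlinarith [hpos2, kπ.trans kf.symm, hsq]
  -- ∑∑ π²/ν ≥ (∑∑ π²)/M
  have hstep1 : (∑ u, ∑ v, (π u v)^2) / M ≤ ∑ u, ∑ v, (π u v)^2 / ν v := by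
    rw [Finset.sum_div]
    refine Finset.sum_le_sum fun u _ => ?_
    rw [Finset.sum_div]
    refine Finset.sum_le_sum fun v _ => ?_
    exact div_le_div_of_nonneg_left (sq_nonneg _) (hνpos v) (hM v)
  calc (∑ u, ∑ v, (f u v)^2) / M
      ≤ (∑ u, ∑ v, (π u v)^2) / M := by gcongr
    _ ≤ ∑ u, ∑ v, (π u v)^2 / ν v := hstep1
end

section
/- Let p, q ≥ 1 and let π : Fin p → Fin q → ℝ be a joint probability matrix whose column margins ν_v = Σ_u π_{u,v} are all strictly positive. Define M_marge(π) = Σ_{u,v} (π_{u,v})²/ν_v and M_max(π) = Σ_v ν_v · max_u (π_{u,v}/ν_v) = Σ_v max_u π_{u,v}. Then M_marge(π) ≤ M_max(π) ≤ √(M_marge(π)). -/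
/-- Comparison of the one-shot performances of the margin
strategy and of the max strategy:
`M_marge(π) ≤ M_max(π) ≤ √(M_marge(π))`, where
`M_marge(π) = Σ_{u,v} π_{u,v}²/ν_v` and `M_max(π) = Σ_v max_u π_{u,v}`. -/
theorem margin_vs_max_one_shot_performance
    (p q : ℕ) (hp : 0 < p) (hq : 0 < q)
    (π : Fin p → Fin q → ℝ)
    (hπnonneg : ∀ u v, 0 ≤ π u v)
    (hπsum : ∑ u, ∑ v, π u v = 1)
    (hνpos : ∀ v, 0 < ∑ u, π u v) :
    (∑ v, ∑ u, (π u v)^2 / (∑ u', π u' v))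
      ≤ ∑ v, Finset.univ.sup' ⟨⟨0, hp⟩, Finset.mem_univ _⟩ (fun u => π u v) ∧
    (∑ v, Finset.univ.sup' ⟨⟨0, hp⟩, Finset.mem_univ _⟩ (fun u => π u v))
      ≤ Real.sqrt (∑ v, ∑ u, (π u v)^2 / (∑ u', π u' v)) := by
  set ν : Fin q → ℝ := fun v => ∑ u, π u v with hν
  set m : Fin q → ℝ := fun v =>
    Finset.univ.sup' ⟨⟨0, hp⟩, Finset.mem_univ _⟩ (fun u => π u v) with hm
  have hmle : ∀ u v, π u v ≤ m v := fun u v => Finset.le_sup' (fun u => π u v) (Finset.mem_univ u)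
  have hmnn : ∀ v, 0 ≤ m v := fun v => le_trans (hπnonneg ⟨0, hp⟩ v) (hmle _ v)
  have hsq : ∀ v, (m v)^2 ≤ ∑ u, (π u v)^2 := by
    intro v
    obtain ⟨u, -, hu⟩ :=
      Finset.exists_mem_eq_sup' (⟨⟨0, hp⟩, Finset.mem_univ _⟩ : Finset.univ.Nonempty)
        (fun u => π u v)
    have : m v = π u v := hu
    rw [this]
    exact Finset.single_le_sum (f := fun i => (π i v)^2) (fun i _ => sq_nonneg _) (Finset.mem_univ u)
  have hνsum : ∑ v, ν v = 1 := by rw [← hπsum, Finset.sum_comm]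
  constructor
  · apply Finset.sum_le_sum
    intro v _
    rw [← Finset.sum_div, div_le_iff₀ (hνpos v)]
    calc ∑ u, (π u v)^2 ≤ ∑ u, m v * π u v := by
          apply Finset.sum_le_sum; intro u _
          rw [sq]; exact mul_le_mul_of_nonneg_right (hmle u v) (hπnonneg u v)
      _ = m v * ν v := by rw [Finset.mul_sum]
  · rw [Real.le_sqrt (Finset.sum_nonneg fun v _ => hmnn v)]
    have hsqrt_ne : ∀ v, Real.sqrt (ν v) ≠ 0 :=
      fun v => ne_of_gt (Real.sqrt_pos.mpr (hνpos v))
    calc (∑ v, m v)^2 = (∑ v, Real.sqrt (ν v) * (m v / Real.sqrt (ν v)))^2 := by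
          congr 1
          refine Finset.sum_congr rfl fun v _ => ?_
          rw [mul_comm, div_mul_cancel₀ _ (hsqrt_ne v)]
      _ ≤ (∑ v, (Real.sqrt (ν v))^2) * (∑ v, (m v / Real.sqrt (ν v))^2) :=
          Finset.sum_mul_sq_le_sq_mul_sq _ _ _
      _ = ∑ v, (m v)^2 / ν v := by
          have h1 : ∑ v, (Real.sqrt (ν v))^2 = 1 := by
            rw [← hνsum]
            exact Finset.sum_congr rfl fun v _ => Real.sq_sqrt (hνpos v).le
          rw [h1, one_mul]
          refine Finset.sum_congr rfl fun v _ => ?_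
          rw [div_pow, Real.sq_sqrt (hνpos v).le]
      _ ≤ ∑ v, ∑ u, (π u v)^2 / ν v := by
          refine Finset.sum_le_sum fun v _ => ?_
          rw [← Finset.sum_div]
          exact div_le_div_of_nonneg_right (hsq v) (hνpos v).le
    all_goals exact Finset.sum_nonneg fun v _ => Finset.sum_nonneg fun u _ => div_nonneg (sq_nonneg _) (hνpos v).le
end

section
/- Let f, g : ℝ → ℝ be measurable, square-integrable on [0,1], nonnegative on [0,1], with ∫₀¹ f = ∫₀¹ g = 1, and satisfying f(u) + g(v) ≥ 1 for all u, v ∈ [0,1]. Then for every measurable, square-integrable π : ℝ × ℝ → ℝ that is nonnegative on [0,1]² and satisfies the margin constraints ∫₀¹ π(u,v) dv = f(u) for almost every u ∈ [0,1] and ∫₀¹ π(u,v) du = g(v) for almost every v ∈ [0,1], one has ∫∫_{[0,1]²} π(u,v)² du dv ≥ ∫∫_{[0,1]²} (f(u) + g(v) − 1)² du dv. In other words, the continuous indetermination density c⁺(u,v) = f(u) + g(v) − 1 minimizes the squared cost among all densities on [0,1]² with margins f and g. -/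
open MeasureTheory Set

/-!
If `π` has margins `f` and `g`, Fubini shows that `∫ π c⁺ = ∫ f² + ∫ g² - ∫ f` does not depend
on `π`. Since `c⁺` itself has margins `f` and `g`, this gives `∫ π c⁺ = ∫ (c⁺)²`, i.e. `π - c⁺`
is orthogonal to `c⁺` in `L²`, and Pythagoras yields `∫ π² = ∫ (c⁺)² + ∫ (π - c⁺)² ≥ ∫ (c⁺)²`.
-/

def HasMargins {α β : Type*} [MeasurableSpace α] [MeasurableSpace β]
    (μ : Measure α) (ν : Measure β) (π : α × β → ℝ) (f : α → ℝ) (g : β → ℝ) : Prop :=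
  (∀ᵐ u ∂μ, ∫ v, π (u, v) ∂ν = f u) ∧ ∀ᵐ v ∂ν, ∫ u, π (u, v) ∂μ = g v

theorem integral_sq_le_integral_sq_of_integral_mul_eq {γ : Type*} [MeasurableSpace γ]
    {ρ : Measure γ} {p c : γ → ℝ} (hp : MemLp p 2 ρ) (hc : MemLp c 2 ρ)
    (h : ∫ x, p x * c x ∂ρ = ∫ x, c x ^ 2 ∂ρ) :
    ∫ x, c x ^ 2 ∂ρ ≤ ∫ x, p x ^ 2 ∂ρ := by
  have hpc : Integrable (fun x => 2 * (p x * c x)) ρ := (hp.integrable_mul hc).const_mul 2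
  have hexpand : ∫ x, (p x - c x) ^ 2 ∂ρ
      = ∫ x, p x ^ 2 ∂ρ - 2 * ∫ x, p x * c x ∂ρ + ∫ x, c x ^ 2 ∂ρ := by
    have hp_sub : Integrable (fun x => p x ^ 2 - 2 * (p x * c x)) ρ := hp.integrable_sq.sub hpc
    simp_rw [sub_sq, mul_assoc]
    rw [integral_add hp_sub hc.integrable_sq,
      integral_sub hp.integrable_sq hpc, integral_const_mul]
  have hnonneg : 0 ≤ ∫ x, (p x - c x) ^ 2 ∂ρ := integral_nonneg fun x => sq_nonneg _
  linarith

section Margins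

variable {α β : Type*} [MeasurableSpace α] [MeasurableSpace β] {μ : Measure α} {ν : Measure β}
  {π : α × β → ℝ} {f : α → ℝ} {g : β → ℝ}

theorem integral_mul_comp_fst_of_ae_integral_eq [SFinite μ] [SFinite ν] {h : α → ℝ}
    (hrow : ∀ᵐ u ∂μ, ∫ v, π (u, v) ∂ν = f u)
    (hπh : Integrable (fun x => π x * h x.1) (μ.prod ν)) :
    ∫ x, π x * h x.1 ∂μ.prod ν = ∫ u, f u * h u ∂μ := by
  rw [integral_prod _ hπh]
  refine integral_congr_ae ?_
  filter_upwards [hrow] with u hu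
  rw [integral_mul_const, hu]

theorem integral_mul_comp_snd_of_ae_integral_eq [SFinite μ] [SFinite ν] {h : β → ℝ}
    (hcol : ∀ᵐ v ∂ν, ∫ u, π (u, v) ∂μ = g v)
    (hπh : Integrable (fun x => π x * h x.2) (μ.prod ν)) :
    ∫ x, π x * h x.2 ∂μ.prod ν = ∫ v, g v * h v ∂ν := by
  rw [integral_prod_symm _ hπh]
  refine integral_congr_ae ?_
  filter_upwards [hcol] with v hv
  rw [integral_mul_const, hv]

theorem HasMargins.integral_mul_indetermination [IsFiniteMeasure μ] [IsFiniteMeasure ν]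
    (hπ : HasMargins μ ν π f g) (hπ2 : MemLp π 2 (μ.prod ν)) (hf : MemLp f 2 μ)
    (hg : MemLp g 2 ν) :
    ∫ x, π x * (f x.1 + g x.2 - 1) ∂μ.prod ν
      = ∫ u, f u ^ 2 ∂μ + ∫ v, g v ^ 2 ∂ν - ∫ u, f u ∂μ := by
  have hπf : Integrable (fun x => π x * f x.1) (μ.prod ν) := hπ2.integrable_mul (hf.comp_fst ν)
  have hπg : Integrable (fun x => π x * g x.2) (μ.prod ν) := hπ2.integrable_mul (hg.comp_snd μ)
  have hπ1 : Integrable (fun x => π x * 1) (μ.prod ν) := by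
    simpa using hπ2.integrable one_le_two
  simp_rw [mul_sub, mul_add]
  rw [integral_sub (f := fun x => π x * f x.1 + π x * g x.2) (hπf.add hπg) hπ1,
    integral_add hπf hπg,
    integral_mul_comp_fst_of_ae_integral_eq hπ.1 hπf,
    integral_mul_comp_snd_of_ae_integral_eq hπ.2 hπg,
    integral_mul_comp_fst_of_ae_integral_eq (h := fun _ => 1) hπ.1 hπ1]
  simp only [sq, mul_one]

theorem hasMargins_indetermination [IsProbabilityMeasure μ] [IsProbabilityMeasure ν]
    (hf : Integrable f μ) (hg : Integrable g ν) (hf1 : ∫ u, f u ∂μ = 1)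
    (hg1 : ∫ v, g v ∂ν = 1) :
    HasMargins μ ν (fun x => f x.1 + g x.2 - 1) f g := by
  constructor
  · refine .of_forall fun u => ?_
    simp [integral_sub, integral_add, hg, hg1]
  · refine .of_forall fun v => ?_
    simp [integral_sub, integral_add, hf, hf1]

end Margins

theorem continuous_indetermination_minimizes_square_cost_general
    (f g : ℝ → ℝ)
    (hf_meas : Measurable f) (hg_meas : Measurable g)
    (hf_sq : IntegrableOn (fun u => (f u)^2) (Icc (0:ℝ) 1))
    (hg_sq : IntegrableOn (fun v => (g v)^2) (Icc (0:ℝ) 1))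
    (hf_int : ∫ u in Icc (0:ℝ) 1, f u = 1)
    (hg_int : ∫ v in Icc (0:ℝ) 1, g v = 1)
    (π : ℝ × ℝ → ℝ)
    (hπ_meas : Measurable π)
    (hπ_sq : IntegrableOn (fun x => (π x)^2) (Icc (0:ℝ) 1 ×ˢ Icc (0:ℝ) 1))
    (hπ_row : ∀ᵐ u ∂(volume.restrict (Icc (0:ℝ) 1)),
      (∫ v in Icc (0:ℝ) 1, π (u, v)) = f u)
    (hπ_col : ∀ᵐ v ∂(volume.restrict (Icc (0:ℝ) 1)),
      (∫ u in Icc (0:ℝ) 1, π (u, v)) = g v) :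
    ∫ x in Icc (0:ℝ) 1 ×ˢ Icc (0:ℝ) 1, (π x)^2
      ≥ ∫ x in Icc (0:ℝ) 1 ×ˢ Icc (0:ℝ) 1, (f x.1 + g x.2 - 1)^2 := by
  set μ := volume.restrict (Icc (0:ℝ) 1)
  have : IsProbabilityMeasure μ := ⟨by simp [μ]⟩
  have hvol : volume.restrict (Icc (0:ℝ) 1 ×ˢ Icc (0:ℝ) 1) = μ.prod μ := by
    rw [Measure.prod_restrict, Measure.volume_eq_prod]
  have hf : MemLp f 2 μ := (memLp_two_iff_integrable_sq hf_meas.aestronglyMeasurable).2 hf_sq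
  have hg : MemLp g 2 μ := (memLp_two_iff_integrable_sq hg_meas.aestronglyMeasurable).2 hg_sq
  have hπ : MemLp π 2 (μ.prod μ) := by
    rw [← hvol]; exact (memLp_two_iff_integrable_sq hπ_meas.aestronglyMeasurable).2 hπ_sq
  have hc : MemLp (fun x : ℝ × ℝ => f x.1 + g x.2 - 1) 2 (μ.prod μ) :=
    ((hf.comp_fst μ).add (hg.comp_snd μ)).sub (memLp_const 1)
  have hc_margins : HasMargins μ μ (fun x => f x.1 + g x.2 - 1) f g :=
    hasMargins_indetermination (hf.integrable one_le_two) (hg.integrable one_le_two) hf_int hg_int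
  rw [ge_iff_le, hvol]
  refine integral_sq_le_integral_sq_of_integral_mul_eq hπ hc ?_
  simp_rw [sq (f _ + g _ - 1)]
  rw [HasMargins.integral_mul_indetermination ⟨hπ_row, hπ_col⟩ hπ hf hg,
    hc_margins.integral_mul_indetermination hc hf hg]

/-- The continuous indetermination density
`c⁺(u,v) = f(u) + g(v) − 1` minimizes the squared cost among all joint
densities on `[0,1]²` with margins `f` and `g`. -/
theorem continuous_indetermination_minimizes_square_cost
    (f g : ℝ → ℝ)
    (hf_meas : Measurable f) (hg_meas : Measurable g)
    (hf_sq : IntegrableOn (fun u => (f u)^2) (Icc (0:ℝ) 1))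
    (hg_sq : IntegrableOn (fun v => (g v)^2) (Icc (0:ℝ) 1))
    (hf_nonneg : ∀ u ∈ Icc (0:ℝ) 1, 0 ≤ f u)
    (hg_nonneg : ∀ v ∈ Icc (0:ℝ) 1, 0 ≤ g v)
    (hf_int : ∫ u in Icc (0:ℝ) 1, f u = 1)
    (hg_int : ∫ v in Icc (0:ℝ) 1, g v = 1)
    (hcond : ∀ u ∈ Icc (0:ℝ) 1, ∀ v ∈ Icc (0:ℝ) 1, 1 ≤ f u + g v)
    (π : ℝ × ℝ → ℝ)
    (hπ_meas : Measurable π)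
    (hπ_sq : IntegrableOn (fun x => (π x)^2) (Icc (0:ℝ) 1 ×ˢ Icc (0:ℝ) 1))
    (hπ_nonneg : ∀ x ∈ Icc (0:ℝ) 1 ×ˢ Icc (0:ℝ) 1, 0 ≤ π x)
    (hπ_row : ∀ᵐ u ∂(volume.restrict (Icc (0:ℝ) 1)),
      (∫ v in Icc (0:ℝ) 1, π (u, v)) = f u)
    (hπ_col : ∀ᵐ v ∂(volume.restrict (Icc (0:ℝ) 1)),
      (∫ u in Icc (0:ℝ) 1, π (u, v)) = g v) :
    ∫ x in Icc (0:ℝ) 1 ×ˢ Icc (0:ℝ) 1, (π x)^2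
      ≥ ∫ x in Icc (0:ℝ) 1 ×ˢ Icc (0:ℝ) 1, (f x.1 + g x.2 - 1)^2 :=
  continuous_indetermination_minimizes_square_cost_general f g hf_meas hg_meas hf_sq hg_sq hf_int
    hg_int π hπ_meas hπ_sq hπ_row hπ_col
end

section
/- Let f, g : ℝ → ℝ be continuous on [0,1], nonnegative on [0,1], with ∫₀¹ f = ∫₀¹ g = 1. Then the condition f(u) + g(v) ≥ 1 for all u, v ∈ [0,1] holds if and only if there exist α ∈ [0,1] and functions r, s : ℝ → ℝ, nonnegative on [0,1] with ∫₀¹ r = ∫₀¹ s = 1, such that f(u) = (1 − α)·r(u) + α and g(v) = α·s(v) + (1 − α) for all u, v ∈ [0,1]. -/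
open MeasureTheory Set

/-!
Take `α = min f`. Positivity at a minimiser of `f` gives `1 - α ≤ g`, and integrating the bounds
`α ≤ f` and `1 - α ≤ g` against the unit mass of `[0,1]` gives `α ∈ [0,1]`. Then
`r = (f - α) / (1 - α)` and `s = (g - (1 - α)) / α` are densities; in the degenerate cases
`α = 1` (resp. `α = 0`) a continuous `f ≥ 1` (resp. `g ≥ 1`) of integral `1` is identically `1`,
and `r` (resp. `s`) can be taken constant. The converse is immediate since `r, s ≥ 0`.
-/

theorem eqOn_Icc_of_le_of_setIntegral_eq {μ : Measure ℝ} [IsLocallyFiniteMeasure μ]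
    [μ.IsOpenPosMeasure] {a b : ℝ} (hab : a ≠ b) {f g : ℝ → ℝ}
    (hf : ContinuousOn f (Icc a b)) (hg : ContinuousOn g (Icc a b))
    (hle : ∀ x ∈ Icc a b, f x ≤ g x) (heq : ∫ x in Icc a b, f x ∂μ = ∫ x in Icc a b, g x ∂μ) :
    EqOn f g (Icc a b) := by
  have hle_ae : f ≤ᵐ[μ.restrict (Icc a b)] g :=
    (ae_restrict_iff' measurableSet_Icc).2 (ae_of_all _ hle)
  exact Measure.eqOn_Icc_of_ae_eq μ hab
    ((integral_eq_iff_of_ae_le hf.integrableOn_Icc hg.integrableOn_Icc hle_ae).1 heq) hf hg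

@[simp]
theorem setIntegral_Icc_zero_one_const (c : ℝ) : ∫ _ in Icc (0:ℝ) 1, c = c := by
  simp

theorem le_setIntegral_Icc_zero_one {f : ℝ → ℝ} {c : ℝ} (hf : IntegrableOn f (Icc 0 1))
    (hle : ∀ x ∈ Icc (0:ℝ) 1, c ≤ f x) : c ≤ ∫ x in Icc (0:ℝ) 1, f x := by
  simpa [Real.volume_Icc] using setIntegral_ge_of_const_le_real measurableSet_Icc
    (by simp [Real.volume_Icc]) hle hf

theorem exists_density_eq_affine_of_le {f : ℝ → ℝ} {β : ℝ} (hf : ContinuousOn f (Icc 0 1))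
    (hf_one : ∫ u in Icc (0:ℝ) 1, f u = 1) (hβ : β ≤ 1) (hle : ∀ u ∈ Icc (0:ℝ) 1, β ≤ f u) :
    ∃ r : ℝ → ℝ, (∀ u ∈ Icc (0:ℝ) 1, 0 ≤ r u) ∧ (∫ u in Icc (0:ℝ) 1, r u) = 1 ∧
      ∀ u ∈ Icc (0:ℝ) 1, f u = (1 - β) * r u + β := by
  rcases hβ.eq_or_lt with rfl | hβ
  · have hf_eq : EqOn (fun _ => 1) f (Icc 0 1) :=
      eqOn_Icc_of_le_of_setIntegral_eq (μ := volume) zero_ne_one continuousOn_const hf hle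
        (by simp [hf_one])
    exact ⟨fun _ => 1, fun _ _ => zero_le_one, by simp, fun u hu => by simp [← hf_eq hu]⟩
  have hβ' : 1 - β ≠ 0 := by linarith
  refine ⟨fun u => (f u - β) / (1 - β), fun u hu => div_nonneg (by linarith [hle u hu])
    (by linarith), ?_, fun u _ => by field_simp; ring⟩
  rw [integral_div, integral_sub hf.integrableOn_Icc (by simp), hf_one,
    setIntegral_Icc_zero_one_const, div_self hβ']

theorem constructive_margins_characterization_general
    (f g : ℝ → ℝ)
    (hf_cont : ContinuousOn f (Icc (0:ℝ) 1))
    (hg_cont : ContinuousOn g (Icc (0:ℝ) 1))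
    (hf_one : ∫ u in Icc (0:ℝ) 1, f u = 1)
    (hg_one : ∫ v in Icc (0:ℝ) 1, g v = 1) :
    (∀ u ∈ Icc (0:ℝ) 1, ∀ v ∈ Icc (0:ℝ) 1, 1 ≤ f u + g v)
    ↔ ∃ α ∈ Icc (0:ℝ) 1, ∃ r s : ℝ → ℝ,
        (∀ u ∈ Icc (0:ℝ) 1, 0 ≤ r u) ∧ (∀ v ∈ Icc (0:ℝ) 1, 0 ≤ s v) ∧
        (∫ u in Icc (0:ℝ) 1, r u) = 1 ∧ (∫ v in Icc (0:ℝ) 1, s v) = 1 ∧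
        (∀ u ∈ Icc (0:ℝ) 1, f u = (1 - α) * r u + α) ∧
        (∀ v ∈ Icc (0:ℝ) 1, g v = α * s v + (1 - α)) := by
  constructor
  · intro hpos
    obtain ⟨u₀, hu₀, hmin⟩ :=
      isCompact_Icc.exists_isMinOn (nonempty_Icc.mpr zero_le_one) hf_cont
    have hg_ge : ∀ v ∈ Icc (0:ℝ) 1, 1 - f u₀ ≤ g v := fun v hv => by linarith [hpos u₀ hu₀ v hv]
    have hα_le : f u₀ ≤ 1 := hf_one ▸ le_setIntegral_Icc_zero_one hf_cont.integrableOn_Icc hmin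
    have hα_nonneg : 0 ≤ f u₀ := by
      linarith [hg_one ▸ le_setIntegral_Icc_zero_one hg_cont.integrableOn_Icc hg_ge]
    obtain ⟨r, hr, hr_one, hfr⟩ := exists_density_eq_affine_of_le hf_cont hf_one hα_le hmin
    obtain ⟨s, hs, hs_one, hgs⟩ :=
      exists_density_eq_affine_of_le hg_cont hg_one (by linarith) hg_ge
    exact ⟨f u₀, ⟨hα_nonneg, hα_le⟩, r, s, hr, hs, hr_one, hs_one, hfr,
      fun v hv => by rw [hgs v hv]; ring⟩
  · rintro ⟨α, ⟨hα₀, hα₁⟩, r, s, hr, hs, -, -, hfr, hgs⟩ u hu v hv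
    rw [hfr u hu, hgs v hv]
    nlinarith [hr u hu, hs v hv]

/-- For continuous densities `f` and `g` on `[0,1]`, the
positivity condition `f(u) + g(v) ≥ 1` for all `u, v ∈ [0,1]` holds if and only
if there exist `α ∈ [0,1]` and densities `r`, `s` on `[0,1]` such that
`f = (1−α)·r + α` and `g = α·s + (1−α)` on `[0,1]`. -/
theorem constructive_margins_characterization
    (f g : ℝ → ℝ)
    (hf_cont : ContinuousOn f (Icc (0:ℝ) 1))
    (hg_cont : ContinuousOn g (Icc (0:ℝ) 1))
    (hf_nonneg : ∀ u ∈ Icc (0:ℝ) 1, 0 ≤ f u)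
    (hg_nonneg : ∀ v ∈ Icc (0:ℝ) 1, 0 ≤ g v)
    (hf_one : ∫ u in Icc (0:ℝ) 1, f u = 1)
    (hg_one : ∫ v in Icc (0:ℝ) 1, g v = 1) :
    (∀ u ∈ Icc (0:ℝ) 1, ∀ v ∈ Icc (0:ℝ) 1, 1 ≤ f u + g v)
    ↔ ∃ α ∈ Icc (0:ℝ) 1, ∃ r s : ℝ → ℝ,
        (∀ u ∈ Icc (0:ℝ) 1, 0 ≤ r u) ∧ (∀ v ∈ Icc (0:ℝ) 1, 0 ≤ s v) ∧
        (∫ u in Icc (0:ℝ) 1, r u) = 1 ∧ (∫ v in Icc (0:ℝ) 1, s v) = 1 ∧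
        (∀ u ∈ Icc (0:ℝ) 1, f u = (1 - α) * r u + α) ∧
        (∀ v ∈ Icc (0:ℝ) 1, g v = α * s v + (1 - α)) :=
  constructive_margins_characterization_general f g hf_cont hg_cont hf_one hg_one
end
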